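/- Let h, a_1,…,a_N, b_1,…,b_N be complex random variables and θ_1,…,θ_N real random variables, all 2N+1+N of them mutually independent, with E[h]=0, E[h²]=0, E[|h|²]=β_h, E[a_n]=E[b_n]=0, E[|a_n|²]=β_a, E[|b_n|²]=β_b for all n, and each θ_n uniformly distributed on [0,2π). Define the aggregate channel G = h + Σ_{n=1}^N conj(a_n)·e^{iθ_n}·b_n. Then E[G]=0, E[|G|²] = β_h + N·β_a·β_b, and E[G²]=0. -/

import Mathlib

open MeasureTheory ProbabilityTheory
open scoped ENNReal NNReal

/-- Index type for the `3 N + 1` random variables `h, a 1, …, a N, b 1, …, b N`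
(complex-valued) and `θ 1, …, θ N` (real-valued). -/
abbrev RISIdx (N : ℕ) : Type := (Unit ⊕ Fin N ⊕ Fin N) ⊕ Fin N

/-- Value type of each of the random variables: `ℂ` for `h`, the `a n` and the `b n`,
and `ℝ` for the phases `θ n`. -/
abbrev RISType (N : ℕ) : RISIdx N → Type := Sum.elim (fun _ => ℂ) (fun _ => ℝ)

/-- The family consisting of the random variables `h`, `a n`, `b n` and `θ n`. -/
def RISFam {Ω : Type*} (N : ℕ) (h : Ω → ℂ) (a b : Fin N → Ω → ℂ) (θ : Fin N → Ω → ℝ) :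
    ∀ i : RISIdx N, Ω → RISType N i
  | .inl (.inl _) => h
  | .inl (.inr (.inl n)) => a n
  | .inl (.inr (.inr n)) => b n
  | .inr n => θ n

/-- The Borel measurable structure on each value type. -/
def RISMeas (N : ℕ) : ∀ i : RISIdx N, MeasurableSpace (RISType N i)
  | .inl _ => inferInstanceAs (MeasurableSpace ℂ)
  | .inr _ => inferInstanceAs (MeasurableSpace ℝ)

/- ### Auxiliary lemmas -/

@[fun_prop] lemma RIS.measurable_conj' : Measurable (starRingEnd ℂ) := by
  simpa [starRingEnd_apply] using (continuous_star.measurable : Measurable (star : ℂ → ℂ))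

/-- Expectation of a product of two independent complex random variables. -/
lemma RIS.integral_mul_complex {Ω : Type*} [MeasurableSpace Ω] {μ : Measure Ω}
    [IsProbabilityMeasure μ] {X Y : Ω → ℂ}
    (hXY : IndepFun X Y μ) (hX : AEMeasurable X μ) (hY : AEMeasurable Y μ) :
    ∫ ω, X ω * Y ω ∂μ = (∫ ω, X ω ∂μ) * ∫ ω, Y ω ∂μ := by
  have hmap := (indepFun_iff_map_prod_eq_prod_map_map hX hY).mp hXY
  have hpm : AEMeasurable (fun ω => (X ω, Y ω)) μ := hX.prodMk hY
  have : IsProbabilityMeasure (μ.map X) := Measure.isProbabilityMeasure_map hX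
  have : IsProbabilityMeasure (μ.map Y) := Measure.isProbabilityMeasure_map hY
  have h1 : ∫ ω, X ω * Y ω ∂μ = ∫ p : ℂ × ℂ, p.1 * p.2 ∂(μ.map fun ω => (X ω, Y ω)) := by
    rw [integral_map (f := fun p : ℂ × ℂ => p.1 * p.2) hpm ((measurable_fst.mul measurable_snd).aestronglyMeasurable)]
  have h2 := MeasureTheory.integral_prod_mul (μ := μ.map X) (ν := μ.map Y)
    (id : ℂ → ℂ) (id : ℂ → ℂ)
  simp only [id] at h2
  have e1 : ∫ x : ℂ, x ∂(μ.map X) = ∫ ω, X ω ∂μ := integral_map hX aestronglyMeasurable_id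
  have e2 : ∫ x : ℂ, x ∂(μ.map Y) = ∫ ω, Y ω ∂μ := integral_map hY aestronglyMeasurable_id
  rw [h1, hmap, h2, e1, e2]

lemma RIS.integrable_conj {Ω : Type*} [MeasurableSpace Ω] {μ : Measure Ω} {f : Ω → ℂ}
    (hf : Integrable f μ) : Integrable (fun ω => (starRingEnd ℂ) (f ω)) μ := by
  refine hf.norm.mono' (RCLike.continuous_conj.comp_aestronglyMeasurable hf.1) ?_
  filter_upwards with ω
  simp

/-- `∫_0^{2π} e^{2 i x} dx = 0`. -/
lemma RIS.integral_exp_sq : ∫ x in Set.Ico (0:ℝ) (2*Real.pi),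
    (Complex.exp ((x:ℂ)*Complex.I))^2 = 0 := by
  rw [MeasureTheory.restrict_Ico_eq_restrict_Ioc]
  rw [← intervalIntegral.integral_of_le (by positivity : (0:ℝ) ≤ 2*Real.pi)]
  have h : ∀ x : ℝ, (Complex.exp ((x:ℂ)*Complex.I))^2 = Complex.exp ((2*Complex.I) * (x:ℂ)) := by
    intro x
    rw [← Complex.exp_nat_mul]
    congr 1; push_cast; ring
  simp only [h]
  rw [integral_exp_mul_complex (by simp [Complex.ext_iff] : (2*Complex.I) ≠ 0)]
  have h2 : Complex.exp (2*Complex.I*(2*(Real.pi:ℂ))) = 1 := by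
    rw [show (2:ℂ)*Complex.I*(2*(Real.pi:ℂ)) = (2:ℤ)*(2*Real.pi*Complex.I) by push_cast; ring]
    exact Complex.exp_int_mul_two_pi_mul_I 2
  simp [Complex.ofReal_mul, h2]

lemma RIS.mul_conj_self (z w : ℂ) (t : ℝ) :
    (starRingEnd ℂ) z * (Complex.exp ((t:ℂ)*Complex.I) * w) *
      (starRingEnd ℂ) ((starRingEnd ℂ) z * (Complex.exp ((t:ℂ)*Complex.I) * w))
      = ((‖z‖^2 * ‖w‖^2 : ℝ) : ℂ) := by
  rw [Complex.mul_conj]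
  simp only [Complex.normSq_mul, Complex.normSq_conj]
  rw [show Complex.normSq (Complex.exp ((t:ℂ)*Complex.I))
      = ‖Complex.exp ((t:ℂ)*Complex.I)‖ ^ 2 from (Complex.sq_norm _).symm]
  simp [Complex.norm_exp_ofReal_mul_I, Complex.normSq_eq_norm_sq]

/-- covariance computation (13)–(14) of the paper. If `h, a n, b n, θ n`
are mutually independent, `h`, the `a n` and the `b n` are centered with
`E[h²] = 0`, `E[|h|²] = βh`, `E[|a n|²] = βa`, `E[|b n|²] = βb`, and each `θ n` is uniform
on `[0, 2π)`, then the aggregate channel `G = h + ∑ n conj (a n) * exp(i θ n) * b n`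
satisfies `E[G] = 0`, `E[|G|²] = βh + N βa βb` and `E[G²] = 0`. -/
theorem stmt4 {Ω : Type*} [MeasurableSpace Ω] (μ : Measure Ω) [IsProbabilityMeasure μ]
    (N : ℕ) (h : Ω → ℂ) (a b : Fin N → Ω → ℂ) (θ : Fin N → Ω → ℝ)
    (hh : Measurable h) (ha : ∀ n, Measurable (a n)) (hb : ∀ n, Measurable (b n))
    (hθ : ∀ n, Measurable (θ n))
    -- all `2 N + 1 + N` random variables are mutually independent
    (h_indep : iIndepFun (m := RISMeas N) (RISFam N h a b θ) μ)
    (βh βa βb : ℝ)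
    (hh2 : MemLp h 2 μ) (ha2 : ∀ n, MemLp (a n) 2 μ) (hb2 : ∀ n, MemLp (b n) 2 μ)
    (hmean_h : ∫ ω, h ω ∂μ = 0) (hsq_h : ∫ ω, (h ω) ^ 2 ∂μ = 0)
    (hvar_h : ∫ ω, ‖h ω‖ ^ 2 ∂μ = βh)
    (hmean_a : ∀ n, ∫ ω, a n ω ∂μ = 0) (hmean_b : ∀ n, ∫ ω, b n ω ∂μ = 0)
    (hvar_a : ∀ n, ∫ ω, ‖a n ω‖ ^ 2 ∂μ = βa) (hvar_b : ∀ n, ∫ ω, ‖b n ω‖ ^ 2 ∂μ = βb)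
    -- each `θ n` is uniformly distributed on `[0, 2π)`
    (hθ_unif : ∀ n, μ.map (θ n)
      = (volume (Set.Ico (0:ℝ) (2 * Real.pi)))⁻¹ •
          volume.restrict (Set.Ico (0:ℝ) (2 * Real.pi)))
    (G : Ω → ℂ)
    (hG : ∀ ω, G ω = h ω + ∑ n : Fin N,
      (starRingEnd ℂ) (a n ω) * Complex.exp ((θ n ω : ℂ) * Complex.I) * b n ω) :
    (∫ ω, G ω ∂μ) = 0 ∧
    (∫ ω, ‖G ω‖ ^ 2 ∂μ) = βh + N * βa * βb ∧
    (∫ ω, (G ω) ^ 2 ∂μ) = 0 := by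
  classical
  have hFmeas : ∀ i, @Measurable _ _ _ (RISMeas N i) (RISFam N h a b θ i) := by
    rintro ((u | (n | n)) | n)
    exacts [hh, ha n, hb n, hθ n]
  -- the summands
  set X : Fin N → Ω → ℂ := fun n ω =>
    (starRingEnd ℂ) (a n ω) * (Complex.exp ((θ n ω : ℂ) * Complex.I) * b n ω) with hXdef
  have hGX : ∀ ω, G ω = h ω + ∑ n, X n ω := by
    intro ω
    rw [hG ω]
    congr 1
    exact Finset.sum_congr rfl fun n _ => by rw [hXdef]; ring
  -- measurability
  have hXm : ∀ n, Measurable (X n) := by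
    intro n
    have h1 := ha n; have h2 := hb n; have h3 := hθ n
    rw [hXdef]; fun_prop
  have hTriplem : Measurable (fun q : ℂ × ℝ × ℂ =>
      (starRingEnd ℂ) q.1 * (Complex.exp ((q.2.1:ℂ) * Complex.I) * q.2.2)) := by fun_prop
  have hEBm : Measurable (fun q : ℝ × ℂ => Complex.exp ((q.1:ℂ) * Complex.I) * q.2) := by
    fun_prop
  have hUm : Measurable (fun t : ℝ => (Complex.exp ((t:ℂ) * Complex.I))^2) := by fun_prop
  have hVm : Measurable (fun q : ℂ × ℂ => ((starRingEnd ℂ) q.1 * q.2)^2) := by fun_prop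
  -- independence of the base families
  have I5 : ∀ n : Fin N, IndepFun (a n) (b n) μ := fun n =>
    h_indep.indepFun (by simp :
      (Sum.inl (Sum.inr (Sum.inl n)) : RISIdx N) ≠ Sum.inl (Sum.inr (Sum.inr n)))
  have I3 : ∀ n : Fin N, IndepFun (a n) (fun ω => (θ n ω, b n ω)) μ := fun n =>
    (h_indep.indepFun_prodMk hFmeas (Sum.inr n) (Sum.inl (Sum.inr (Sum.inr n)))
      (Sum.inl (Sum.inr (Sum.inl n))) (by simp) (by simp)).symm
  have I4 : ∀ n : Fin N, IndepFun (θ n) (fun ω => (a n ω, b n ω)) μ := fun n =>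
    (h_indep.indepFun_prodMk hFmeas (Sum.inl (Sum.inr (Sum.inl n)))
      (Sum.inl (Sum.inr (Sum.inr n))) (Sum.inr n) (by simp) (by simp)).symm
  have I1 : ∀ n : Fin N, IndepFun h (fun ω => (a n ω, θ n ω, b n ω)) μ := by
    intro n
    set S : Finset (RISIdx N) := {Sum.inl (Sum.inl ())}
    set T : Finset (RISIdx N) :=
      {Sum.inl (Sum.inr (Sum.inl n)), Sum.inr n, Sum.inl (Sum.inr (Sum.inr n))}
    have hd : Disjoint S T := by simp [S, T, Finset.disjoint_left]
    have base := h_indep.indepFun_finset S T hd hFmeas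
    have hφ : @Measurable (∀ i : S, RISType N i) ℂ
        (MeasurableSpace.pi (m := fun i : S => RISMeas N i)) _
        (fun p => p ⟨Sum.inl (Sum.inl ()), by simp [S]⟩) :=
      @measurable_pi_apply S (fun i => RISType N i) (fun i => RISMeas N i) _
    have hψ : @Measurable (∀ i : T, RISType N i) (ℂ × ℝ × ℂ)
        (MeasurableSpace.pi (m := fun i : T => RISMeas N i)) _
        (fun p => ((p ⟨Sum.inl (Sum.inr (Sum.inl n)), by simp [T]⟩ : ℂ),
          (p ⟨Sum.inr n, by simp [T]⟩ : ℝ),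
          (p ⟨Sum.inl (Sum.inr (Sum.inr n)), by simp [T]⟩ : ℂ))) := by
      refine Measurable.prodMk ?_ (Measurable.prodMk ?_ ?_) <;>
        exact @measurable_pi_apply T (fun i => RISType N i) (fun i => RISMeas N i) _
    exact base.comp hφ hψ
  have I2 : ∀ n m : Fin N, n ≠ m →
      IndepFun (fun ω => (a n ω, θ n ω, b n ω)) (fun ω => (a m ω, θ m ω, b m ω)) μ := by
    intro n m hnm
    set S : Finset (RISIdx N) :=
      {Sum.inl (Sum.inr (Sum.inl n)), Sum.inr n, Sum.inl (Sum.inr (Sum.inr n))}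
    set T : Finset (RISIdx N) :=
      {Sum.inl (Sum.inr (Sum.inl m)), Sum.inr m, Sum.inl (Sum.inr (Sum.inr m))}
    have hd : Disjoint S T := by simp [S, T, Finset.disjoint_left, hnm]
    have base := h_indep.indepFun_finset S T hd hFmeas
    have hψS : @Measurable (∀ i : S, RISType N i) (ℂ × ℝ × ℂ)
        (MeasurableSpace.pi (m := fun i : S => RISMeas N i)) _
        (fun p => ((p ⟨Sum.inl (Sum.inr (Sum.inl n)), by simp [S]⟩ : ℂ),
          (p ⟨Sum.inr n, by simp [S]⟩ : ℝ),
          (p ⟨Sum.inl (Sum.inr (Sum.inr n)), by simp [S]⟩ : ℂ))) := by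
      refine Measurable.prodMk ?_ (Measurable.prodMk ?_ ?_) <;>
        exact @measurable_pi_apply S (fun i => RISType N i) (fun i => RISMeas N i) _
    have hψT : @Measurable (∀ i : T, RISType N i) (ℂ × ℝ × ℂ)
        (MeasurableSpace.pi (m := fun i : T => RISMeas N i)) _
        (fun p => ((p ⟨Sum.inl (Sum.inr (Sum.inl m)), by simp [T]⟩ : ℂ),
          (p ⟨Sum.inr m, by simp [T]⟩ : ℝ),
          (p ⟨Sum.inl (Sum.inr (Sum.inr m)), by simp [T]⟩ : ℂ))) := by
      refine Measurable.prodMk ?_ (Measurable.prodMk ?_ ?_) <;>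
        exact @measurable_pi_apply T (fun i => RISType N i) (fun i => RISMeas N i) _
    exact base.comp hψS hψT
  -- derived independence
  have IhX : ∀ n, IndepFun h (X n) μ := fun n => (I1 n).comp measurable_id hTriplem
  have IXX : ∀ n m, n ≠ m → IndepFun (X n) (X m) μ := fun n m hnm =>
    (I2 n m hnm).comp hTriplem hTriplem
  have ICE : ∀ n, IndepFun (fun ω => (starRingEnd ℂ) (a n ω))
      (fun ω => Complex.exp ((θ n ω : ℂ) * Complex.I) * b n ω) μ := fun n =>
    (I3 n).comp RIS.measurable_conj' hEBm
  have IUV : ∀ n, IndepFun (fun ω => (Complex.exp ((θ n ω : ℂ) * Complex.I))^2)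
      (fun ω => ((starRingEnd ℂ) (a n ω) * b n ω)^2) μ := fun n =>
    (I4 n).comp hUm hVm
  have Insq : ∀ n, IndepFun (fun ω => ‖a n ω‖^2) (fun ω => ‖b n ω‖^2) μ := fun n =>
    (I5 n).comp (measurable_norm.pow_const 2) (measurable_norm.pow_const 2)
  -- integrability
  have hint_h : Integrable h μ := hh2.integrable one_le_two
  have hint_a : ∀ n, Integrable (a n) μ := fun n => (ha2 n).integrable one_le_two
  have hint_b : ∀ n, Integrable (b n) μ := fun n => (hb2 n).integrable one_le_two
  have hint_ca : ∀ n, Integrable (fun ω => (starRingEnd ℂ) (a n ω)) μ := fun n =>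
    RIS.integrable_conj (hint_a n)
  have hint_Eb : ∀ n, Integrable (fun ω => Complex.exp ((θ n ω : ℂ) * Complex.I) * b n ω) μ := by
    intro n
    refine (hint_b n).bdd_mul (c := 1) ?_ (Filter.Eventually.of_forall fun ω => ?_)
    · exact (Complex.measurable_exp.comp
        ((Complex.measurable_ofReal.comp (hθ n)).mul_const _)).aestronglyMeasurable
    · exact le_of_eq (by simp [Complex.norm_exp_ofReal_mul_I])
  have hint_X : ∀ n, Integrable (X n) μ := fun n =>
    (ICE n).integrable_mul (hint_ca n) (hint_Eb n)
  have hint_cX : ∀ n, Integrable (fun ω => (starRingEnd ℂ) (X n ω)) μ := fun n =>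
    RIS.integrable_conj (hint_X n)
  have hnsq_a : ∀ n, Integrable (fun ω => ‖a n ω‖^2) μ := fun n => (ha2 n).norm.integrable_sq
  have hnsq_b : ∀ n, Integrable (fun ω => ‖b n ω‖^2) μ := fun n => (hb2 n).norm.integrable_sq
  have hnsq_h : Integrable (fun ω => ‖h ω‖^2) μ := hh2.norm.integrable_sq
  -- mean of the summands is zero
  have hEX : ∀ n, ∫ ω, X n ω ∂μ = 0 := by
    intro n
    show ∫ ω, (starRingEnd ℂ) (a n ω) * (Complex.exp ((θ n ω : ℂ) * Complex.I) * b n ω) ∂μ = 0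
    rw [RIS.integral_mul_complex (ICE n)
      ((RIS.measurable_conj'.comp (ha n)).aemeasurable)
      ((hEBm.comp ((hθ n).prodMk (hb n))).aemeasurable)]
    rw [integral_conj, hmean_a n]
    simp
  have hEcX : ∀ n, ∫ ω, (starRingEnd ℂ) (X n ω) ∂μ = 0 := by
    intro n
    rw [integral_conj, hEX n]
    simp
  -- mean of `exp(2iθ)`-type terms is zero (uniform phase)
  have hU0 : ∀ n, ∫ ω, (Complex.exp ((θ n ω : ℂ) * Complex.I))^2 ∂μ = 0 := by
    intro n
    have hmap : ∫ x : ℝ, (Complex.exp ((x:ℂ) * Complex.I))^2 ∂(μ.map (θ n))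
        = ∫ ω, (Complex.exp ((θ n ω : ℂ) * Complex.I))^2 ∂μ :=
      integral_map (hθ n).aemeasurable hUm.aestronglyMeasurable
    rw [← hmap, hθ_unif n, integral_smul_measure, RIS.integral_exp_sq, smul_zero]
  -- the diagonal second moments
  have hXXd : ∀ n, ∫ ω, X n ω * X n ω ∂μ = 0 := by
    intro n
    have e : ∀ ω, X n ω * X n ω = (Complex.exp ((θ n ω : ℂ) * Complex.I))^2 *
        ((starRingEnd ℂ) (a n ω) * b n ω)^2 := by
      intro ω; rw [hXdef]; ring
    rw [integral_congr_ae (Filter.Eventually.of_forall e)]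
    rw [RIS.integral_mul_complex (IUV n)
      ((hUm.comp (hθ n)).aemeasurable)
      ((hVm.comp ((ha n).prodMk (hb n))).aemeasurable)]
    rw [hU0 n, zero_mul]
  have hXcXd : ∀ n, ∫ ω, X n ω * (starRingEnd ℂ) (X n ω) ∂μ = ((βa * βb : ℝ) : ℂ) := by
    intro n
    have e : ∀ ω, X n ω * (starRingEnd ℂ) (X n ω)
        = ((‖a n ω‖^2 * ‖b n ω‖^2 : ℝ) : ℂ) := by
      intro ω; rw [hXdef]; exact RIS.mul_conj_self _ _ _
    have hi : ∫ ω, ((‖a n ω‖^2 * ‖b n ω‖^2 : ℝ) : ℂ) ∂μ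
        = ((∫ ω, ‖a n ω‖^2 * ‖b n ω‖^2 ∂μ : ℝ) : ℂ) := integral_ofReal
    have hprod : ∫ ω, ‖a n ω‖^2 * ‖b n ω‖^2 ∂μ = βa * βb := by
      rw [show (∫ ω, ‖a n ω‖^2 * ‖b n ω‖^2 ∂μ) = ∫ ω, ((fun ω => ‖a n ω‖^2) * (fun ω => ‖b n ω‖^2)) ω ∂μ from rfl,
        (Insq n).integral_mul_eq_mul_integral ((ha n).norm.pow_const 2).aestronglyMeasurable
        ((hb n).norm.pow_const 2).aestronglyMeasurable, hvar_a n, hvar_b n]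
    rw [integral_congr_ae (Filter.Eventually.of_forall e), hi, hprod]
  -- integrability of the diagonal products
  have hint_XcX : ∀ n, Integrable (fun ω => X n ω * (starRingEnd ℂ) (X n ω)) μ := by
    intro n
    have e : ∀ ω, ((‖a n ω‖^2 * ‖b n ω‖^2 : ℝ) : ℂ)
        = X n ω * (starRingEnd ℂ) (X n ω) := by
      intro ω; rw [hXdef]; exact (RIS.mul_conj_self _ _ _).symm
    exact (((Insq n).integrable_mul (hnsq_a n) (hnsq_b n)).ofReal).congr
      (Filter.Eventually.of_forall e)
  have hint_XX : ∀ n, Integrable (fun ω => X n ω * X n ω) μ := by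
    intro n
    have e : ∀ ω, (Complex.exp ((θ n ω : ℂ) * Complex.I))^2 *
        ((starRingEnd ℂ) (a n ω) * b n ω)^2 = X n ω * X n ω := by
      intro ω; rw [hXdef]; ring
    have hint_U : Integrable (fun ω => (Complex.exp ((θ n ω : ℂ) * Complex.I))^2) μ := by
      refine (integrable_const (1:ℝ)).mono' (hUm.comp (hθ n)).aestronglyMeasurable ?_
      filter_upwards with ω
      simp [norm_pow, Complex.norm_exp_ofReal_mul_I]
    have hint_ca2 : Integrable (fun ω => ((starRingEnd ℂ) (a n ω))^2) μ := by
      refine (hnsq_a n).mono' ?_ ?_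
      · exact ((RIS.measurable_conj'.comp (ha n)).pow_const 2).aestronglyMeasurable
      · filter_upwards with ω
        simp [norm_pow]
    have hint_b2 : Integrable (fun ω => (b n ω)^2) μ := by
      refine (hnsq_b n).mono' (((hb n).pow_const 2)).aestronglyMeasurable ?_
      filter_upwards with ω
      simp [norm_pow]
    have hIV : Integrable (fun ω => ((starRingEnd ℂ) (a n ω) * b n ω)^2) μ := by
      have := (((I5 n).comp (RIS.measurable_conj'.pow_const 2) (measurable_id.pow_const 2)) :
        IndepFun (fun ω => ((starRingEnd ℂ) (a n ω))^2) (fun ω => (b n ω)^2) μ).integrable_mul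
        hint_ca2 hint_b2
      refine this.congr (Filter.Eventually.of_forall fun ω => ?_)
      simp [Pi.mul_apply, mul_pow]
    exact ((IUV n).integrable_mul hint_U hIV).congr (Filter.Eventually.of_forall e)
  have hint_XXnm : ∀ n m, Integrable (fun ω => X n ω * X m ω) μ := by
    intro n m
    by_cases hnm : n = m
    · subst hnm; exact hint_XX n
    · exact (IXX n m hnm).integrable_mul (hint_X n) (hint_X m)
  have hint_XcXnm : ∀ n m, Integrable (fun ω => X n ω * (starRingEnd ℂ) (X m ω)) μ := by
    intro n m
    by_cases hnm : n = m
    · subst hnm; exact hint_XcX n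
    · exact ((IXX n m hnm).comp measurable_id RIS.measurable_conj').integrable_mul
        (hint_X n) (hint_cX m)
  have hint_hX : ∀ n, Integrable (fun ω => h ω * X n ω) μ := fun n =>
    (IhX n).integrable_mul hint_h (hint_X n)
  have hint_Xh : ∀ n, Integrable (fun ω => X n ω * h ω) μ := fun n =>
    (IhX n).symm.integrable_mul (hint_X n) hint_h
  have hint_hcX : ∀ n, Integrable (fun ω => h ω * (starRingEnd ℂ) (X n ω)) μ := fun n =>
    ((IhX n).comp measurable_id RIS.measurable_conj').integrable_mul hint_h (hint_cX n)
  have hint_Xch : ∀ n, Integrable (fun ω => X n ω * (starRingEnd ℂ) (h ω)) μ := fun n =>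
    ((IhX n).symm.comp measurable_id RIS.measurable_conj').integrable_mul (hint_X n)
      (RIS.integrable_conj hint_h)
  have hint_hh : Integrable (fun ω => h ω * h ω) μ := by
    refine (hnsq_h).mono' (hh.mul hh).aestronglyMeasurable ?_
    filter_upwards with ω
    rw [norm_mul]
    exact le_of_eq (sq ‖h ω‖).symm
  have hint_hch : Integrable (fun ω => h ω * (starRingEnd ℂ) (h ω)) μ := by
    refine (hnsq_h).mono' (hh.mul (RIS.measurable_conj'.comp hh)).aestronglyMeasurable ?_
    filter_upwards with ω
    rw [norm_mul]
    simp [sq]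
  -- values of the cross moments
  have hEhX : ∀ n, ∫ ω, h ω * X n ω ∂μ = 0 := by
    intro n
    rw [RIS.integral_mul_complex (IhX n) hh.aemeasurable (hXm n).aemeasurable, hmean_h, zero_mul]
  have hEXh : ∀ n, ∫ ω, X n ω * h ω ∂μ = 0 := by
    intro n
    rw [RIS.integral_mul_complex (IhX n).symm (hXm n).aemeasurable hh.aemeasurable, hEX n,
      zero_mul]
  have hEhcX : ∀ n, ∫ ω, h ω * (starRingEnd ℂ) (X n ω) ∂μ = 0 := by
    intro n
    have hth := RIS.integral_mul_complex ((IhX n).comp measurable_id RIS.measurable_conj')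
      hh.aemeasurable (RIS.measurable_conj'.comp (hXm n)).aemeasurable
    simp only [Function.comp_apply, id_eq] at hth
    rw [hth, hmean_h, zero_mul]
  have hEXch : ∀ n, ∫ ω, X n ω * (starRingEnd ℂ) (h ω) ∂μ = 0 := by
    intro n
    have hth := RIS.integral_mul_complex ((IhX n).symm.comp measurable_id RIS.measurable_conj')
      (hXm n).aemeasurable (RIS.measurable_conj'.comp hh).aemeasurable
    simp only [Function.comp_apply, id_eq] at hth
    rw [hth, hEX n, zero_mul]
  have hEXXnm : ∀ n m, n ≠ m → ∫ ω, X n ω * X m ω ∂μ = 0 := by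
    intro n m hnm
    rw [RIS.integral_mul_complex (IXX n m hnm) (hXm n).aemeasurable (hXm m).aemeasurable,
      hEX n, zero_mul]
  have hEXcXnm : ∀ n m, n ≠ m → ∫ ω, X n ω * (starRingEnd ℂ) (X m ω) ∂μ = 0 := by
    intro n m hnm
    have hth := RIS.integral_mul_complex ((IXX n m hnm).comp measurable_id RIS.measurable_conj')
      (hXm n).aemeasurable (RIS.measurable_conj'.comp (hXm m)).aemeasurable
    simp only [Function.comp_apply, id_eq] at hth
    rw [hth, hEX n, zero_mul]
  -- ### Goal 1 : the mean
  have goal1 : ∫ ω, G ω ∂μ = 0 := by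
    rw [integral_congr_ae (Filter.Eventually.of_forall hGX)]
    rw [integral_add hint_h (integrable_finset_sum _ fun n _ => hint_X n)]
    rw [integral_finset_sum _ fun n _ => hint_X n]
    simp [hmean_h, hEX]
  -- ### Goal 3 : the pseudo-variance
  have goal3 : ∫ ω, (G ω)^2 ∂μ = 0 := by
    have e : ∀ ω, (G ω)^2 = h ω * h ω + ((∑ n, h ω * X n ω) +
        ((∑ n, X n ω * h ω) + ∑ n, ∑ m, X n ω * X m ω)) := by
      intro ω
      rw [← Fintype.sum_mul_sum (fun n => X n ω) (fun m => X m ω),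
        ← Finset.mul_sum, ← Finset.sum_mul, hGX ω]
      ring
    have int_hX' : Integrable (fun ω => ∑ n, h ω * X n ω) μ :=
      integrable_finset_sum _ fun n _ => hint_hX n
    have int_Xh' : Integrable (fun ω => ∑ n, X n ω * h ω) μ :=
      integrable_finset_sum _ fun n _ => hint_Xh n
    have int_dd : Integrable (fun ω => ∑ n, ∑ m, X n ω * X m ω) μ :=
      integrable_finset_sum _ fun n _ => integrable_finset_sum _ fun m _ => hint_XXnm n m
    have int_c2 : Integrable (fun ω => (∑ n, X n ω * h ω) + ∑ n, ∑ m, X n ω * X m ω) μ :=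
      int_Xh'.add int_dd
    have int_c1 : Integrable (fun ω => (∑ n, h ω * X n ω) +
        ((∑ n, X n ω * h ω) + ∑ n, ∑ m, X n ω * X m ω)) μ := int_hX'.add int_c2
    rw [integral_congr_ae (Filter.Eventually.of_forall e)]
    rw [integral_add hint_hh int_c1, integral_add int_hX' int_c2, integral_add int_Xh' int_dd,
      integral_finset_sum _ fun n _ => hint_hX n,
      integral_finset_sum _ fun n _ => hint_Xh n,
      integral_finset_sum _ fun n _ =>
        integrable_finset_sum _ fun m _ => hint_XXnm n m]
    have hdouble : ∀ n : Fin N, ∫ ω, (∑ m, X n ω * X m ω) ∂μ = 0 := by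
      intro n
      rw [integral_finset_sum _ fun m _ => hint_XXnm n m]
      refine Finset.sum_eq_zero fun m _ => ?_
      by_cases hnm : n = m
      · subst hnm; exact hXXd n
      · exact hEXXnm n m hnm
    have hhh : ∫ ω, h ω * h ω ∂μ = 0 := by
      rw [← hsq_h]
      exact integral_congr_ae (Filter.Eventually.of_forall fun ω => by simp [sq])
    simp [hhh, hEhX, hEXh, hdouble]
  -- ### Goal 2 : the variance
  have key2 : ∫ ω, G ω * (starRingEnd ℂ) (G ω) ∂μ = ((βh + N * βa * βb : ℝ) : ℂ) := by
    have e : ∀ ω, G ω * (starRingEnd ℂ) (G ω) = h ω * (starRingEnd ℂ) (h ω) +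
        ((∑ n, h ω * (starRingEnd ℂ) (X n ω)) +
        ((∑ n, X n ω * (starRingEnd ℂ) (h ω)) +
          ∑ n, ∑ m, X n ω * (starRingEnd ℂ) (X m ω))) := by
      intro ω
      have hc : (starRingEnd ℂ) (G ω) = (starRingEnd ℂ) (h ω)
          + ∑ n, (starRingEnd ℂ) (X n ω) := by
        rw [hGX ω, map_add, map_sum]
      rw [← Fintype.sum_mul_sum (fun n => X n ω) (fun m => (starRingEnd ℂ) (X m ω)),
        ← Finset.mul_sum, ← Finset.sum_mul, hc, hGX ω]
      ring
    have int_hcX : Integrable (fun ω => ∑ n, h ω * (starRingEnd ℂ) (X n ω)) μ :=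
      integrable_finset_sum _ fun n _ => hint_hcX n
    have int_Xch' : Integrable (fun ω => ∑ n, X n ω * (starRingEnd ℂ) (h ω)) μ :=
      integrable_finset_sum _ fun n _ => hint_Xch n
    have int_dd : Integrable (fun ω => ∑ n, ∑ m, X n ω * (starRingEnd ℂ) (X m ω)) μ :=
      integrable_finset_sum _ fun n _ => integrable_finset_sum _ fun m _ => hint_XcXnm n m
    have int_c2 : Integrable (fun ω => (∑ n, X n ω * (starRingEnd ℂ) (h ω)) +
        ∑ n, ∑ m, X n ω * (starRingEnd ℂ) (X m ω)) μ := int_Xch'.add int_dd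
    have int_c1 : Integrable (fun ω => (∑ n, h ω * (starRingEnd ℂ) (X n ω)) +
        ((∑ n, X n ω * (starRingEnd ℂ) (h ω)) +
          ∑ n, ∑ m, X n ω * (starRingEnd ℂ) (X m ω))) μ := int_hcX.add int_c2
    rw [integral_congr_ae (Filter.Eventually.of_forall e)]
    rw [integral_add hint_hch int_c1, integral_add int_hcX int_c2, integral_add int_Xch' int_dd,
      integral_finset_sum _ fun n _ => hint_hcX n,
      integral_finset_sum _ fun n _ => hint_Xch n,
      integral_finset_sum _ fun n _ =>
        integrable_finset_sum _ fun m _ => hint_XcXnm n m]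
    have hhch : ∫ ω, h ω * (starRingEnd ℂ) (h ω) ∂μ = ((βh : ℝ) : ℂ) := by
      have e2 : ∀ ω, h ω * (starRingEnd ℂ) (h ω) = ((‖h ω‖^2 : ℝ) : ℂ) := by
        intro ω
        rw [Complex.mul_conj]
        norm_cast
        rw [← Complex.sq_norm]
      have hi : ∫ ω, ((‖h ω‖^2 : ℝ) : ℂ) ∂μ = ((∫ ω, ‖h ω‖^2 ∂μ : ℝ) : ℂ) := integral_ofReal
      rw [integral_congr_ae (Filter.Eventually.of_forall e2), hi, hvar_h]
    have hdouble : ∀ n : Fin N, ∫ ω, (∑ m, X n ω * (starRingEnd ℂ) (X m ω)) ∂μ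
        = ((βa * βb : ℝ) : ℂ) := by
      intro n
      rw [integral_finset_sum _ fun m _ => hint_XcXnm n m]
      rw [Finset.sum_eq_single n (fun m _ hmn => hEXcXnm n m (Ne.symm hmn)) (by simp)]
      exact hXcXd n
    rw [hhch]
    have h1 : ∑ n : Fin N, ∫ ω, h ω * (starRingEnd ℂ) (X n ω) ∂μ = 0 :=
      Finset.sum_eq_zero fun n _ => hEhcX n
    have h2 : ∑ n : Fin N, ∫ ω, X n ω * (starRingEnd ℂ) (h ω) ∂μ = 0 :=
      Finset.sum_eq_zero fun n _ => hEXch n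
    have h3 : ∑ n : Fin N, ∫ ω, (∑ m, X n ω * (starRingEnd ℂ) (X m ω)) ∂μ
        = (N : ℂ) * ((βa * βb : ℝ) : ℂ) := by
      rw [Finset.sum_congr rfl fun n _ => hdouble n]
      simp [Finset.sum_const, Finset.card_univ]
    rw [h1, h2, h3]
    push_cast
    ring
  have goal2 : ∫ ω, ‖G ω‖^2 ∂μ = βh + N * βa * βb := by
    have e : ∀ ω, ((‖G ω‖^2 : ℝ) : ℂ) = G ω * (starRingEnd ℂ) (G ω) := by
      intro ω
      rw [Complex.mul_conj]
      norm_cast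
      rw [← Complex.sq_norm]
    have hi : ∫ ω, ((‖G ω‖^2 : ℝ) : ℂ) ∂μ = ((∫ ω, ‖G ω‖^2 ∂μ : ℝ) : ℂ) := integral_ofReal
    have : ((∫ ω, ‖G ω‖^2 ∂μ : ℝ) : ℂ) = ((βh + N * βa * βb : ℝ) : ℂ) := by
      rw [← hi, integral_congr_ae (Filter.Eventually.of_forall e), key2]
    exact_mod_cast this
  exact ⟨goal1, goal2, goal3⟩
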